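/- arXiv:1712.07408 — 3 statements merged into one kernel-verified Lean document; each statement's English description precedes it below -/
import Mathlib

section
/- Let T = (Q, Σ, δ) be a complete, deterministic, invertible synchronous automaton (a G-automaton) with inverse automaton over state set Q̄. For any word x (finite or infinite) over Σ, either the orbit of x under the semigroup action Q* ∘ x equals the orbit under the group action (Q ∪ Q̄)* ∘ x, or both orbits are infinite. -/
/-- A G-automaton: complete deterministic transition function `δ : Q → A → A × Q`;
invertibility is the hypothesis that each state's output map is a bijection. -/
abbrev Word (A : Type*) := List A ⊕ (ℕ → A)

variable {Q A : Type*}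

/-- The state reached after reading the first `n` letters of the stream `ξ` from state `q`. -/
def gstate (δ : Q → A → A × Q) (ξ : ℕ → A) (q : Q) : ℕ → Q
  | 0 => q
  | n + 1 => (δ (gstate δ ξ q n) (ξ n)).2

/-- The action of a state on an infinite word. -/
def gactS (δ : Q → A → A × Q) (q : Q) (ξ : ℕ → A) : ℕ → A :=
  fun n => (δ (gstate δ ξ q n) (ξ n)).1

/-- The action of a state on a finite word. -/
def gactL (δ : Q → A → A × Q) : Q → List A → List A
  | _, [] => []
  | q, a :: w => (δ q a).1 :: gactL δ (δ q a).2 w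

/-- The action of a state on a (finite or infinite) word. -/
def gact (δ : Q → A → A × Q) (q : Q) : Word A → Word A
  | .inl l => .inl (gactL δ q l)
  | .inr s => .inr (gactS δ q s)

/-- The orbit `Q* ∘ x` of `x` under the semigroup action of the states. -/
def fwdOrbit (δ : Q → A → A × Q) (x : Word A) : Set (Word A) :=
  {y | Relation.ReflTransGen (fun y z => ∃ q : Q, gact δ q y = z) x y}

/-- The orbit `(Q ∪ Q̄)* ∘ x` of `x` under the action of the states and the inverse states
(an inverse state acts by taking the preimage under the corresponding state's action). -/
def fullOrbit (δ : Q → A → A × Q) (x : Word A) : Set (Word A) :=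
  {y | Relation.ReflTransGen
    (fun y z => (∃ q : Q, gact δ q y = z) ∨ (∃ q : Q, gact δ q z = y)) x y}

/-! Each state acts injectively on words, since its output map on letters is injective. An
injective map of a finite set into itself is onto, so a finite forward orbit, being closed under
every state, is also closed under every inverse state and hence contains the full orbit. If the
forward orbit is infinite, so is the full orbit, which contains it. -/

theorem Set.Finite.mem_of_apply_mem {α : Type*} {s : Set α} (hs : s.Finite) {f : α → α}
    (hf : Function.Injective f) (hmaps : Set.MapsTo f s s) {y : α} (hy : f y ∈ s) : y ∈ s := by
  obtain ⟨z, hz, hzy⟩ := ((hs.injOn_iff_bijOn_of_mapsTo hmaps).1 hf.injOn).surjOn hy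
  rwa [← hf hzy]

section Injectivity

variable {δ : Q → A → A × Q} (hδ : ∀ q, Function.Injective fun a => (δ q a).1)
include hδ

theorem gactL_injective (q : Q) : Function.Injective (gactL δ q) := by
  intro v w h
  induction v generalizing q w with
  | nil => cases w <;> simp_all [gactL]
  | cons a v ih =>
    cases w with
    | nil => simp [gactL] at h
    | cons b w =>
      simp only [gactL, List.cons.injEq] at h
      obtain rfl : a = b := hδ q h.1
      rw [ih _ h.2]

theorem eq_and_gstate_eq_of_gactS_eq {q : Q} {ξ η : ℕ → A} (h : gactS δ q ξ = gactS δ q η) (n : ℕ) :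
    ξ n = η n ∧ gstate δ ξ q n = gstate δ η q n := by
  have letter_eq (n : ℕ) (hn : gstate δ ξ q n = gstate δ η q n) : ξ n = η n := by
    have := congrFun h n
    simp only [gactS, hn] at this
    exact hδ _ this
  induction n with
  | zero => exact ⟨letter_eq 0 rfl, rfl⟩
  | succ n ih =>
    have hs : gstate δ ξ q (n + 1) = gstate δ η q (n + 1) := by simp [gstate, ih.1, ih.2]
    exact ⟨letter_eq _ hs, hs⟩

theorem gactS_injective (q : Q) : Function.Injective (gactS δ q) :=
  fun _ _ h => funext fun n => (eq_and_gstate_eq_of_gactS_eq hδ h n).1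

theorem gact_injective (q : Q) : Function.Injective (gact δ q) := by
  rintro (v | ξ) (w | η) h <;> simp only [gact, Sum.inl.injEq, Sum.inr.injEq, reduceCtorEq] at h
  · rw [gactL_injective hδ q h]
  · rw [gactS_injective hδ q h]

end Injectivity

theorem gact_mem_fwdOrbit {δ : Q → A → A × Q} {x y : Word A} (hy : y ∈ fwdOrbit δ x) (q : Q) :
    gact δ q y ∈ fwdOrbit δ x :=
  hy.tail ⟨q, rfl⟩

theorem fwdOrbit_subset_fullOrbit (δ : Q → A → A × Q) (x : Word A) :
    fwdOrbit δ x ⊆ fullOrbit δ x :=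
  fun _ => Relation.ReflTransGen.mono (fun _ _ => Or.inl) _ _

theorem fullOrbit_subset_fwdOrbit_of_finite {δ : Q → A → A × Q}
    (hδ : ∀ q, Function.Injective fun a => (δ q a).1) {x : Word A}
    (hfin : (fwdOrbit δ x).Finite) : fullOrbit δ x ⊆ fwdOrbit δ x := by
  intro y hy
  induction hy with
  | refl => exact .refl
  | tail _ step ih =>
    rcases step with ⟨q, rfl⟩ | ⟨q, rfl⟩
    · exact gact_mem_fwdOrbit ih q
    · exact hfin.mem_of_apply_mem (gact_injective hδ q) (fun _ hz => gact_mem_fwdOrbit hz q) ih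

theorem stmt0_general (δ : Q → A → A × Q)
    (hinv : ∀ q : Q, Function.Bijective fun a => (δ q a).1) (x : Word A) :
    fwdOrbit δ x = fullOrbit δ x ∨
      ((fwdOrbit δ x).Infinite ∧ (fullOrbit δ x).Infinite) := by
  by_cases hfin : (fwdOrbit δ x).Finite
  · exact .inl <| (fwdOrbit_subset_fullOrbit δ x).antisymm
      (fullOrbit_subset_fwdOrbit_of_finite (fun q => (hinv q).injective) hfin)
  · exact .inr ⟨hfin, fun h => hfin (h.subset (fwdOrbit_subset_fullOrbit δ x))⟩

theorem stmt0 [Fintype Q] [Fintype A] (δ : Q → A → A × Q)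
    (hinv : ∀ q : Q, Function.Bijective fun a => (δ q a).1) (x : Word A) :
    fwdOrbit δ x = fullOrbit δ x ∨
      ((fwdOrbit δ x).Infinite ∧ (fullOrbit δ x).Infinite) :=
  stmt0_general δ hinv x
end

section
/- Let ρ : FG({a,b}) → SL₂(ℤ) be the homomorphism from the free group on two generators a, b defined by ρ(a) = [[1,2],[0,1]] and ρ(b) = [[1,0],[2,1]]. Then ρ is injective; i.e., the matrices [[1,2],[0,1]] and [[1,0],[2,1]] generate a free subgroup of SL₂(ℤ) of rank 2. -/
/-- The matrix `[[1,2],[0,1]]` as an element of `SL₂(ℤ)` (the image of `a`). -/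
def matA : Matrix.SpecialLinearGroup (Fin 2) ℤ :=
  ⟨!![1, 2; 0, 1], by norm_num [Matrix.det_fin_two_of]⟩

/-- The matrix `[[1,0],[2,1]]` as an element of `SL₂(ℤ)` (the image of `b`). -/
def matB : Matrix.SpecialLinearGroup (Fin 2) ℤ :=
  ⟨!![1, 0; 2, 1], by norm_num [Matrix.det_fin_two_of]⟩

/-! ### Auxiliary setup for the ping-pong lemma -/

/-- Nonzero integer vectors, on which `SL₂(ℤ)` acts. -/
abbrev PPV := {v : Fin 2 → ℤ // v ≠ 0}

instance : MulAction (Matrix.SpecialLinearGroup (Fin 2) ℤ) PPV where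
  smul g v := ⟨g.val.mulVec v.val, by
    intro h
    apply v.2
    have : (g⁻¹ * g).val.mulVec v.val = 0 := by
      rw [Matrix.SpecialLinearGroup.coe_mul, ← Matrix.mulVec_mulVec, h, Matrix.mulVec_zero]
    simpa using this⟩
  one_smul v := by
    ext i
    show (1 : Matrix (Fin 2) (Fin 2) ℤ).mulVec v.val i = _
    simp
  mul_smul g h v := by
    ext i
    show (g * h).val.mulVec v.val i = g.val.mulVec (h.val.mulVec v.val) i
    rw [Matrix.mulVec_mulVec, Matrix.SpecialLinearGroup.coe_mul]

lemma ppv_smul_val (g : Matrix.SpecialLinearGroup (Fin 2) ℤ) (v : PPV) :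
    (g • v).val = g.val.mulVec v.val := rfl

lemma matA_inv : matA⁻¹ = (⟨!![1, -2; 0, 1], by norm_num [Matrix.det_fin_two_of]⟩ :
    Matrix.SpecialLinearGroup (Fin 2) ℤ) := by
  apply inv_eq_of_mul_eq_one_right
  apply Subtype.ext
  show (!![1, 2; 0, 1] : Matrix (Fin 2) (Fin 2) ℤ) * !![1, -2; 0, 1] = 1
  rw [Matrix.mul_fin_two, Matrix.one_fin_two]
  norm_num

lemma matB_inv : matB⁻¹ = (⟨!![1, 0; -2, 1], by norm_num [Matrix.det_fin_two_of]⟩ :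
    Matrix.SpecialLinearGroup (Fin 2) ℤ) := by
  apply inv_eq_of_mul_eq_one_right
  apply Subtype.ext
  show (!![1, 0; 2, 1] : Matrix (Fin 2) (Fin 2) ℤ) * !![1, 0; -2, 1] = 1
  rw [Matrix.mul_fin_two, Matrix.one_fin_two]
  norm_num

lemma smulA0 (v : PPV) : (matA • v).val 0 = v.val 0 + 2 * v.val 1 := by
  rw [ppv_smul_val]
  simp [matA, Matrix.mulVec, dotProduct, Fin.sum_univ_two]
lemma smulA1 (v : PPV) : (matA • v).val 1 = v.val 1 := by
  rw [ppv_smul_val]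
  simp [matA, Matrix.mulVec, dotProduct, Fin.sum_univ_two]
lemma smulAinv0 (v : PPV) : (matA⁻¹ • v).val 0 = v.val 0 - 2 * v.val 1 := by
  rw [ppv_smul_val, matA_inv]
  simp [Matrix.mulVec, dotProduct, Fin.sum_univ_two]; ring
lemma smulAinv1 (v : PPV) : (matA⁻¹ • v).val 1 = v.val 1 := by
  rw [ppv_smul_val, matA_inv]
  simp [Matrix.mulVec, dotProduct, Fin.sum_univ_two]
lemma smulB0 (v : PPV) : (matB • v).val 0 = v.val 0 := by
  rw [ppv_smul_val]
  simp [matB, Matrix.mulVec, dotProduct, Fin.sum_univ_two]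
lemma smulB1 (v : PPV) : (matB • v).val 1 = 2 * v.val 0 + v.val 1 := by
  rw [ppv_smul_val]
  simp [matB, Matrix.mulVec, dotProduct, Fin.sum_univ_two]
lemma smulBinv0 (v : PPV) : (matB⁻¹ • v).val 0 = v.val 0 := by
  rw [ppv_smul_val, matB_inv]
  simp [Matrix.mulVec, dotProduct, Fin.sum_univ_two]
lemma smulBinv1 (v : PPV) : (matB⁻¹ • v).val 1 = v.val 1 - 2 * v.val 0 := by
  rw [ppv_smul_val, matB_inv]
  simp [Matrix.mulVec, dotProduct, Fin.sum_univ_two]; ring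

lemma ppv_ne (v : PPV) : v.val 0 ≠ 0 ∨ v.val 1 ≠ 0 := by
  by_contra h
  push_neg at h
  exact v.2 (funext fun i => by fin_cases i <;> simp [h.1, h.2])

/-! ### The key arithmetic lemmas -/

lemma keyA1 (x y : ℤ) (h0 : x ≠ 0 ∨ y ≠ 0) (h : ¬(|y| ≤ |x| ∧ x * y < 0)) :
    |y| < |x + 2 * y| ∧ 0 ≤ (x + 2 * y) * y := by
  rw [not_and_or, not_le, not_lt, abs_lt_iff_mul_self_lt] at h
  rw [abs_lt_iff_mul_self_lt]
  rcases h with h | h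
  · constructor <;> nlinarith [sq_nonneg (x + y)]
  · have hpos : 0 < x * x ∨ 0 < y * y := by
      rcases h0 with h0 | h0
      · exact Or.inl (mul_self_pos.mpr h0)
      · exact Or.inr (mul_self_pos.mpr h0)
    constructor
    · rcases hpos with hp | hp <;> nlinarith
    · nlinarith [mul_self_nonneg y]

lemma keyA2 (x y : ℤ) (h0 : x ≠ 0 ∨ y ≠ 0) (h : ¬(|y| < |x| ∧ 0 ≤ x * y)) :
    |y| ≤ |x - 2 * y| ∧ (x - 2 * y) * y < 0 := by
  rw [not_and_or, not_lt, not_le, abs_le_iff_mul_self_le] at h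
  rw [abs_le_iff_mul_self_le]
  rcases h with h | h
  · have hy : 0 < y * y := by
      rcases h0 with h0 | h0
      · have := mul_self_pos.mpr h0; nlinarith
      · exact mul_self_pos.mpr h0
    constructor <;> nlinarith [sq_nonneg (x - y)]
  · have hy : 0 < y * y := by
      refine mul_self_pos.mpr fun hy => ?_
      rw [hy] at h; simp at h
    constructor <;> nlinarith

lemma keyB1 (x y : ℤ) (h : ¬(|x| < |y| ∧ x * y < 0)) :
    |x| ≤ |2 * x + y| ∧ 0 ≤ x * (2 * x + y) := by
  rw [not_and_or, not_lt, not_lt, abs_le_iff_mul_self_le] at h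
  rw [abs_le_iff_mul_self_le]
  rcases h with h | h
  · constructor <;> nlinarith [sq_nonneg (x + y)]
  · constructor <;> nlinarith [mul_self_nonneg x]

lemma keyB2 (x y : ℤ) (h : ¬(|x| ≤ |y| ∧ 0 ≤ x * y)) :
    |x| < |2 * x - y| ∧ x * (2 * x - y) > 0 := by
  rw [not_and_or, not_le, not_le, abs_lt_iff_mul_self_lt] at h
  rw [abs_lt_iff_mul_self_lt]
  rcases h with h | h
  · have hx : 0 < x * x := by nlinarith [mul_self_nonneg y]
    constructor <;> nlinarith [sq_nonneg (x - y)]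
  · have hx : 0 < x * x := by
      refine mul_self_pos.mpr fun hx => ?_
      rw [hx] at h; simp at h
    constructor <;> nlinarith

/-! ### The ping-pong sets -/

/-- Ping-pong sets `X`. -/
def ppX : Bool → Set PPV := fun i =>
  if i then {v | |v.val 1| < |v.val 0| ∧ 0 ≤ v.val 0 * v.val 1}
  else {v | |v.val 0| ≤ |v.val 1| ∧ 0 ≤ v.val 0 * v.val 1}

/-- Ping-pong sets `Y`. -/
def ppY : Bool → Set PPV := fun i =>
  if i then {v | |v.val 1| ≤ |v.val 0| ∧ v.val 0 * v.val 1 < 0}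
  else {v | |v.val 0| < |v.val 1| ∧ v.val 0 * v.val 1 < 0}

/-- The homomorphism from the free group on two generators `a = true`, `b = false`
sending `a ↦ [[1,2],[0,1]]` and `b ↦ [[1,0],[2,1]]` is injective. -/
theorem stmt3 :
    Function.Injective ⇑(FreeGroup.lift fun x : Bool => if x then matA else matB) := by
  apply FreeGroup.injective_lift_of_ping_pong _ ppX ppY
  · -- nonempty
    intro i
    cases i
    · exact ⟨⟨![0, 1], fun h => by simpa using congrFun h 1⟩, by simp [ppX]⟩
    · exact ⟨⟨![1, 0], fun h => by simpa using congrFun h 0⟩, by simp [ppX]⟩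
  · -- X pairwise disjoint
    intro i j hij
    have : (i = true ∧ j = false) ∨ (i = false ∧ j = true) := by
      cases i <;> cases j <;> simp_all
    rcases this with ⟨rfl, rfl⟩ | ⟨rfl, rfl⟩ <;>
      · simp only [Function.onFun]
        rw [Set.disjoint_left]
        rintro v hv hv'
        simp only [ppX, if_true, if_false, Set.mem_setOf_eq] at hv hv'
        have := hv.1; have := hv'.1; omega
  · -- Y pairwise disjoint
    intro i j hij
    have : (i = true ∧ j = false) ∨ (i = false ∧ j = true) := by
      cases i <;> cases j <;> simp_all
    rcases this with ⟨rfl, rfl⟩ | ⟨rfl, rfl⟩ <;>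
      · simp only [Function.onFun]
        rw [Set.disjoint_left]
        rintro v hv hv'
        simp only [ppY, if_true, if_false, Set.mem_setOf_eq] at hv hv'
        have := hv.1; have := hv'.1; omega
  · -- X and Y disjoint
    intro i j
    rw [Set.disjoint_left]
    intro v hv hv'
    cases i <;> cases j <;>
      simp only [ppX, ppY, if_true, if_false, Set.mem_setOf_eq] at hv hv' <;>
      · have := hv.2; have := hv'.2; omega
  · -- a i • (Y i)ᶜ ⊆ X i
    intro i
    rintro w ⟨v, hv, rfl⟩
    cases i
    · -- matB
      simp only [ppY, Set.mem_compl_iff, Set.mem_setOf_eq, Bool.false_eq_true, if_false, if_true] at hv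
      simp only [ppX, Set.mem_setOf_eq, Bool.false_eq_true, if_false, if_true]
      rw [smulB0, smulB1]
      exact keyB1 (v.val 0) (v.val 1) hv
    · -- matA
      simp only [ppY, Set.mem_compl_iff, Set.mem_setOf_eq, Bool.false_eq_true, if_false, if_true] at hv
      simp only [ppX, Set.mem_setOf_eq, Bool.false_eq_true, if_false, if_true]
      rw [smulA0, smulA1]
      exact keyA1 (v.val 0) (v.val 1) (ppv_ne v) hv
  · -- (a i)⁻¹ • (X i)ᶜ ⊆ Y i
    intro i
    rintro w ⟨v, hv, rfl⟩
    cases i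
    · -- matB
      simp only [ppX, Set.mem_compl_iff, Set.mem_setOf_eq, Bool.false_eq_true, if_false, if_true, Pi.inv_apply] at hv ⊢
      simp only [ppY, Set.mem_setOf_eq, Bool.false_eq_true, if_false, if_true]
      rw [smulBinv0, smulBinv1]
      have := keyB2 (v.val 0) (v.val 1) hv
      constructor
      · rw [show v.val 1 - 2 * v.val 0 = -(2 * v.val 0 - v.val 1) by ring, abs_neg]
        exact this.1
      · nlinarith [this.2]
    · -- matA
      simp only [ppX, Set.mem_compl_iff, Set.mem_setOf_eq, Bool.false_eq_true, if_false, if_true, Pi.inv_apply] at hv ⊢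
      simp only [ppY, Set.mem_setOf_eq, Bool.false_eq_true, if_false, if_true]
      rw [smulAinv0, smulAinv1]
      exact keyA2 (v.val 0) (v.val 1) (ppv_ne v) hv
end

section
/- Let S be a group generated (as a semigroup) by a finite set Q with |Q| ≥ 2, identified with words over Q modulo the relations of S. If S is not a free semigroup on Q (i.e., there exist distinct words p', q' ∈ Q⁺ representing the same element of S), then there exist distinct words p, q ∈ Q⁺ of the same length representing the same element of S. -/
private lemma aux_one {G Q : Type*} [Group G] [Fintype Q] (hQ : 2 ≤ Fintype.card Q)
    (f : Q → G) (t : List Q) (ht : t ≠ []) (hprod : (t.map f).prod = 1) :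
    ∃ p q : List Q, p ≠ [] ∧ p ≠ q ∧ p.length = q.length ∧
      (p.map f).prod = (q.map f).prod := by
  obtain ⟨a, s, rfl⟩ := List.exists_cons_of_ne_nil ht
  obtain ⟨b, hb⟩ := Fintype.exists_ne_of_one_lt_card (by omega) a
  refine ⟨(a :: s) ++ [b], b :: (a :: s), by simp, ?_, by simp, ?_⟩
  · intro hcontra
    have : a = b := by
      have := congrArg (List.head? ·) hcontra
      simpa using this
    exact hb this.symm
  · rw [List.map_append, List.prod_append, hprod, one_mul,
      show (b :: a :: s) = [b] ++ (a :: s) from rfl, List.map_append,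
      List.prod_append, hprod, mul_one]

private lemma aux_two {G Q : Type*} [Group G] [Fintype Q] (hQ : 2 ≤ Fintype.card Q)
    (f : Q → G) (p' q' : List Q) (hne : p' ≠ q')
    (heq : (p'.map f).prod = (q'.map f).prod)
    (hc : p' ++ q' = q' ++ p') (hle : p'.length ≤ q'.length) :
    ∃ p q : List Q, p ≠ [] ∧ p ≠ q ∧ p.length = q.length ∧
      (p.map f).prod = (q.map f).prod := by
  have h1 : p' <+: q' :=
    List.prefix_of_prefix_length_le (List.prefix_append p' q')
      (hc ▸ List.prefix_append q' p') hle
  obtain ⟨t, rfl⟩ := h1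
  have ht : t ≠ [] := by rintro rfl; simp at hne
  have hprod : (t.map f).prod = 1 := by
    simp only [List.map_append, List.prod_append] at heq
    exact mul_left_cancel (a := (p'.map f).prod)
      (by rw [mul_one, ← heq])
  exact aux_one hQ f t ht hprod

/-- Let `G` be a group generated as a semigroup by (the image of) a finite set `Q` with
`|Q| ≥ 2`. If the evaluation map on nonempty words over `Q` is not injective (the semigroup
is not free on `Q`), then two distinct words of the *same length* evaluate equally. -/
theorem stmt7 {G Q : Type*} [Group G] [Fintype Q] (hQ : 2 ≤ Fintype.card Q)
    (f : Q → G) (hgen : Subsemigroup.closure (Set.range f) = ⊤)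
    (h : ∃ p' q' : List Q, p' ≠ [] ∧ q' ≠ [] ∧ p' ≠ q' ∧
      (p'.map f).prod = (q'.map f).prod) :
    ∃ p q : List Q, p ≠ [] ∧ p ≠ q ∧ p.length = q.length ∧
      (p.map f).prod = (q.map f).prod := by
  obtain ⟨p', q', hp, hq, hne, heq⟩ := h
  by_cases hc : p' ++ q' = q' ++ p'
  · rcases le_total p'.length q'.length with hle | hle
    · exact aux_two hQ f p' q' hne heq hc hle
    · exact aux_two hQ f q' p' hne.symm heq.symm hc.symm hle
  · refine ⟨p' ++ q', q' ++ p', by simp [hp], hc, by simp [Nat.add_comm], ?_⟩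
    simp [List.map_append, List.prod_append, heq]
end
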